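/- Let p ∈ ℂ[x₁,…,xₙ] be an irreducible homogeneous polynomial of degree d. Then there exists s > 0 such that for every homogeneous polynomial q ∈ ℂ[x₁,…,xₙ] of degree d (or q = 0) all of whose coefficients have absolute value at most s, the polynomial p + q is irreducible in ℂ[x₁,…,xₙ]. -/

import Mathlib

/-!
If the claim failed, there would be homogeneous `q_m → 0` with `p + q_m` reducible. Factors of
a nonzero homogeneous polynomial are homogeneous, so `p + q_m = f_m * g_m` with `f_m`, `g_m`
homogeneous of positive degrees `a`, `b`, and along an ultrafilter `(a, b)` is eventually
constant. Dividing each factor by a coefficient of largest norm leaves it in a compact set, with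
one coefficient equal to `1`; the limits `X`, `Y` are therefore nonzero, homogeneous of degrees
`a`, `b`, and the scalars relating `p + q_m` to the normalized products converge as well. Hence
`p = c • X * Y` is reducible.
-/

open MvPolynomial Finset Filter Topology

namespace MvPolynomial

variable {σ R K : Type*}

section Factorization

variable [CommSemiring R] {f g : MvPolynomial σ R} {n : ℕ}

lemma IsHomogeneous.degree_eq (hf : f.IsHomogeneous n) {τ : σ →₀ ℕ} (hτ : coeff τ f ≠ 0) :
    τ.degree = n := by
  by_contra hne
  exact hτ (hf.coeff_eq_zero hne)

lemma order_coe_le_totalDegree (hf : f ≠ 0) :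
    (f : MvPowerSeries σ R).order ≤ f.totalDegree := by
  obtain ⟨τ, hτ⟩ := ne_zero_iff.mp hf
  calc (f : MvPowerSeries σ R).order ≤ τ.degree := MvPowerSeries.order_le (by rwa [coeff_coe])
    _ ≤ f.totalDegree := by exact_mod_cast le_totalDegree (mem_support_iff.mpr hτ)

lemma isHomogeneous_totalDegree_of_totalDegree_le_order
    (h : (f.totalDegree : ℕ∞) ≤ (f : MvPowerSeries σ R).order) :
    f.IsHomogeneous f.totalDegree := by
  intro τ hτ
  have hle : (f : MvPowerSeries σ R).order ≤ τ.degree :=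
    MvPowerSeries.order_le (by rwa [coeff_coe])
  rw [Pi.one_def, ← Finsupp.degree_eq_weight_one]
  exact le_antisymm (le_totalDegree (mem_support_iff.mpr hτ)) (by exact_mod_cast h.trans hle)

lemma IsHomogeneous.order_coe (hf : f.IsHomogeneous n) (h0 : f ≠ 0) :
    (f : MvPowerSeries σ R).order = n := by
  obtain ⟨τ, hτ⟩ := ne_zero_iff.mp h0
  refine MvPowerSeries.order_eq_nat.mpr ⟨⟨τ, by rwa [coeff_coe], ?_⟩, fun τ' hτ' => ?_⟩
  · exact hf.degree_eq hτ
  · rw [coeff_coe]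
    exact hf.coeff_eq_zero hτ'.ne

/-- Both the lowest degree (the order as a power series) and the total degree are additive, and
they agree exactly for homogeneous polynomials. -/
theorem IsHomogeneous.exists_isHomogeneous_of_mul [NoZeroDivisors R]
    (h : (f * g).IsHomogeneous n) (hfg : f * g ≠ 0) :
    ∃ a b, a + b = n ∧ f.IsHomogeneous a ∧ g.IsHomogeneous b := by
  have hf : f ≠ 0 := left_ne_zero_of_mul hfg
  have hg : g ≠ 0 := right_ne_zero_of_mul hfg
  have hdeg : f.totalDegree + g.totalDegree = n := by
    rw [← totalDegree_mul_of_isDomain hf hg, h.totalDegree hfg]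
  have hord : (f : MvPowerSeries σ R).order + (g : MvPowerSeries σ R).order = n := by
    rw [← MvPowerSeries.order_mul, ← coe_mul, h.order_coe hfg]
  have hf' := order_coe_le_totalDegree hf
  have hg' := order_coe_le_totalDegree hg
  lift (f : MvPowerSeries σ R).order to ℕ using ne_top_of_le_ne_top (ENat.natCast_ne_top _) hf'
    with a ha
  lift (g : MvPowerSeries σ R).order to ℕ using ne_top_of_le_ne_top (ENat.natCast_ne_top _) hg'
    with b hb
  norm_cast at hord hf' hg'
  refine ⟨_, _, hdeg, isHomogeneous_totalDegree_of_totalDegree_le_order ?_,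
    isHomogeneous_totalDegree_of_totalDegree_le_order ?_⟩
  · rw [← ha]; exact_mod_cast (by omega : f.totalDegree ≤ a)
  · rw [← hb]; exact_mod_cast (by omega : g.totalDegree ≤ b)

end Factorization

def HasHomogeneousFactorization [CommSemiring R] (h : MvPolynomial σ R) (a b : ℕ) : Prop :=
  ∃ f g : MvPolynomial σ R, f.IsHomogeneous a ∧ g.IsHomogeneous b ∧ h = f * g

section Field

variable [Field K] {f h : MvPolynomial σ K} {n : ℕ}

lemma IsHomogeneous.isUnit_iff (hf : f.IsHomogeneous n) (h0 : f ≠ 0) : IsUnit f ↔ n = 0 := by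
  rw [isUnit_iff_totalDegree_of_isReduced, hf.totalDegree h0, isUnit_iff_ne_zero]
  refine ⟨And.right, fun hn => ⟨fun hc => h0 ?_, hn⟩⟩
  rw [totalDegree_eq_zero_iff_eq_C.mp ((hf.totalDegree h0).trans hn), hc, C_0]

lemma exists_hasHomogeneousFactorization_of_not_irreducible (hh : h.IsHomogeneous n)
    (h0 : h ≠ 0) (hn : n ≠ 0) (hirr : ¬ Irreducible h) :
    ∃ ab ∈ antidiagonal n, ab.1 ≠ 0 ∧ ab.2 ≠ 0 ∧ h.HasHomogeneousFactorization ab.1 ab.2 := by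
  have hnu : ¬ IsUnit h := fun hu => hn ((hh.isUnit_iff h0).mp hu)
  obtain ⟨f, g, rfl, hf, hg⟩ : ∃ f g, h = f * g ∧ ¬ IsUnit f ∧ ¬ IsUnit g := by
    simpa [irreducible_iff, hnu, not_or] using hirr
  obtain ⟨a, b, hab, hfa, hgb⟩ := hh.exists_isHomogeneous_of_mul h0
  refine ⟨(a, b), HasAntidiagonal.mem_antidiagonal.mpr hab, ?_, ?_, f, g, hfa, hgb, rfl⟩
  · exact fun ha => hf ((hfa.isUnit_iff (left_ne_zero_of_mul h0)).mpr ha)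
  · exact fun hb => hg ((hgb.isUnit_iff (right_ne_zero_of_mul h0)).mpr hb)

lemma HasHomogeneousFactorization.not_irreducible {a b : ℕ}
    (hfac : h.HasHomogeneousFactorization a b) (h0 : h ≠ 0) (ha : a ≠ 0) (hb : b ≠ 0) :
    ¬ Irreducible h := by
  obtain ⟨f, g, hfa, hgb, rfl⟩ := hfac
  intro hirr
  rcases hirr.isUnit_or_isUnit rfl with hf | hg
  · exact ha ((hfa.isUnit_iff (left_ne_zero_of_mul h0)).mp hf)
  · exact hb ((hgb.isUnit_iff (right_ne_zero_of_mul h0)).mp hg)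

end Field

section Limits

variable {ι : Type*} {l : Filter ι}

lemma eventually_ne_zero_of_tendsto_coeff [CommSemiring R] [TopologicalSpace R] [T1Space R]
    {h : ι → MvPolynomial σ R} {p : MvPolynomial σ R} (hp : p ≠ 0)
    (hlim : ∀ τ, Tendsto (fun i => coeff τ (h i)) l (𝓝 (coeff τ p))) : ∀ᶠ i in l, h i ≠ 0 := by
  obtain ⟨τ, hτ⟩ := ne_zero_iff.mp hp
  filter_upwards [(hlim τ).eventually_ne hτ] with i hi h0
  exact hi (by rw [h0, coeff_zero])

lemma tendsto_coeff_mul [CommSemiring R] [TopologicalSpace R] [IsTopologicalSemiring R]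
    {x y : ι → MvPolynomial σ R} {X Y : MvPolynomial σ R}
    (hx : ∀ τ, Tendsto (fun i => coeff τ (x i)) l (𝓝 (coeff τ X)))
    (hy : ∀ τ, Tendsto (fun i => coeff τ (y i)) l (𝓝 (coeff τ Y))) (τ : σ →₀ ℕ) :
    Tendsto (fun i => coeff τ (x i * y i)) l (𝓝 (coeff τ (X * Y))) := by
  classical
  simp only [coeff_mul]
  exact tendsto_finsetSum _ fun uv _ => (hx uv.1).mul (hy uv.2)

lemma exists_eq_C_mul_of_tendsto [Field K] [TopologicalSpace K] [IsTopologicalDivisionRing K]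
    [T2Space K] [l.NeBot] {t : ι → K} {x : ι → MvPolynomial σ K} {X p : MvPolynomial σ K}
    (hX : X ≠ 0) (hx : ∀ τ, Tendsto (fun i => coeff τ (x i)) l (𝓝 (coeff τ X)))
    (hp : ∀ τ, Tendsto (fun i => t i * coeff τ (x i)) l (𝓝 (coeff τ p))) :
    ∃ c, p = C c * X := by
  obtain ⟨τ, hτ⟩ := ne_zero_iff.mp hX
  have ht : Tendsto t l (𝓝 (coeff τ p / coeff τ X)) := by
    refine ((hp τ).div (hx τ) hτ).congr' ?_
    filter_upwards [(hx τ).eventually_ne hτ] with i hi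
    exact mul_div_cancel_right₀ _ hi
  refine ⟨coeff τ p / coeff τ X, MvPolynomial.ext _ _ fun τ' => ?_⟩
  rw [coeff_C_mul]
  exact tendsto_nhds_unique (hp τ') (ht.mul (hx τ'))

end Limits

section NormedField

variable [NormedField K] {n : ℕ}

def IsNormalizedHomogeneous (x : MvPolynomial σ K) (n : ℕ) : Prop :=
  x.IsHomogeneous n ∧ (∀ τ, ‖coeff τ x‖ ≤ 1) ∧ ∃ τ, coeff τ x = 1

/-- Divide by a coefficient of largest norm. -/
lemma IsHomogeneous.exists_eq_C_mul_isNormalizedHomogeneous {f : MvPolynomial σ K}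
    (hf : f.IsHomogeneous n) (h0 : f ≠ 0) : ∃ c x, f = C c * x ∧ x.IsNormalizedHomogeneous n := by
  obtain ⟨τ, hτ, hmax⟩ :=
    f.support.exists_max_image (fun τ => ‖coeff τ f‖) (support_nonempty.mpr h0)
  have hc : coeff τ f ≠ 0 := mem_support_iff.mp hτ
  refine ⟨coeff τ f, C (coeff τ f)⁻¹ * f, ?_, ⟨hf.C_mul _, fun τ' => ?_, τ, ?_⟩⟩
  · rw [← mul_assoc, ← map_mul, mul_inv_cancel₀ hc, map_one, one_mul]
  · rw [coeff_C_mul, norm_mul, norm_inv, inv_mul_le_one₀ (norm_pos_iff.mpr hc)]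
    by_cases hτ' : τ' ∈ f.support
    · exact hmax τ' hτ'
    · rw [notMem_support_iff.mp hτ', norm_zero]
      exact norm_nonneg _
  · rw [coeff_C_mul, inv_mul_cancel₀ hc]

variable [ProperSpace K] [Finite σ] {ι : Type*} (U : Ultrafilter ι)

lemma exists_tendsto_coeff_of_isNormalizedHomogeneous {x : ι → MvPolynomial σ K}
    (hx : ∀ᶠ i in U, (x i).IsNormalizedHomogeneous n) :
    ∃ X : MvPolynomial σ K, X.IsHomogeneous n ∧ X ≠ 0 ∧
      ∀ τ, Tendsto (fun i => coeff τ (x i)) U (𝓝 (coeff τ X)) := by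
  have hlim : ∀ τ, ∃ c, Tendsto (fun i => coeff τ (x i)) U (𝓝 c) := fun τ => by
    obtain ⟨c, -, hc⟩ := (isCompact_closedBall (0 : K) 1).ultrafilter_le_nhds
      (U.map fun i => coeff τ (x i)) (by
        rw [Ultrafilter.coe_map, le_principal_iff, Filter.mem_map]
        filter_upwards [hx] with i hi
        simpa using hi.2.1 τ)
    exact ⟨c, hc⟩
  choose L hL using hlim
  have hL0 : ∀ τ, τ.degree ≠ n → L τ = 0 := fun τ hτ =>
    tendsto_nhds_unique (hL τ) (tendsto_const_nhds.congr' (by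
      filter_upwards [hx] with i hi
      exact (hi.1.coeff_eq_zero hτ).symm))
  have hfin : (Function.support L).Finite :=
    (Finsupp.finite_of_degree_le n).subset fun τ hτ => (not_imp_comm.mp (hL0 τ) hτ).le
  let X : MvPolynomial σ K := AddMonoidAlgebra.ofCoeff (Finsupp.ofSupportFinite L hfin)
  have hX : ∀ τ, coeff τ X = L τ := fun _ => rfl
  obtain ⟨τ, -, hτ⟩ := (U.eventually_exists_mem_iff (Finsupp.finite_of_degree_le n)).mp (by
    filter_upwards [hx] with i hi
    obtain ⟨hhom, -, τ, hτ⟩ := hi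
    exact ⟨τ, (hhom.degree_eq (hτ ▸ one_ne_zero)).le, hτ⟩)
  refine ⟨X, fun τ hτ => ?_, ne_zero_iff.mpr ⟨τ, ?_⟩, fun τ => by rw [hX]; exact hL τ⟩
  · rw [hX] at hτ
    rw [Pi.one_def, ← Finsupp.degree_eq_weight_one]
    exact not_imp_comm.mp (hL0 τ) hτ
  · rw [hX, tendsto_nhds_unique (hL τ) (tendsto_const_nhds.congr' (hτ.mono fun _ hi => hi.symm))]
    exact one_ne_zero

theorem HasHomogeneousFactorization.of_tendsto {a b : ℕ} {h : ι → MvPolynomial σ K}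
    {p : MvPolynomial σ K} (hp : p ≠ 0)
    (hlim : ∀ τ, Tendsto (fun i => coeff τ (h i)) U (𝓝 (coeff τ p)))
    (hfac : ∀ᶠ i in U, (h i).HasHomogeneousFactorization a b) :
    p.HasHomogeneousFactorization a b := by
  have hnorm : ∀ᶠ i in U, ∃ cxy : K × MvPolynomial σ K × MvPolynomial σ K,
      h i = C cxy.1 * (cxy.2.1 * cxy.2.2) ∧
        cxy.2.1.IsNormalizedHomogeneous a ∧ cxy.2.2.IsNormalizedHomogeneous b := by
    filter_upwards [hfac, eventually_ne_zero_of_tendsto_coeff hp hlim] with i hi h0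
    obtain ⟨f, g, hf, hg, hfg⟩ := hi
    rw [hfg] at h0 ⊢
    obtain ⟨c, x, rfl, hx⟩ := hf.exists_eq_C_mul_isNormalizedHomogeneous (left_ne_zero_of_mul h0)
    obtain ⟨c', y, rfl, hy⟩ := hg.exists_eq_C_mul_isNormalizedHomogeneous (right_ne_zero_of_mul h0)
    exact ⟨(c * c', x, y), by rw [map_mul]; ring, hx, hy⟩
  obtain ⟨cxy, hcxy⟩ := hnorm.choice
  obtain ⟨X, hXa, hX0, hX⟩ :=
    exists_tendsto_coeff_of_isNormalizedHomogeneous U (hcxy.mono fun _ hi => hi.2.1)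
  obtain ⟨Y, hYb, hY0, hY⟩ :=
    exists_tendsto_coeff_of_isNormalizedHomogeneous U (hcxy.mono fun _ hi => hi.2.2)
  obtain ⟨c, rfl⟩ := exists_eq_C_mul_of_tendsto (mul_ne_zero hX0 hY0) (tendsto_coeff_mul hX hY)
    fun τ => (hlim τ).congr' (hcxy.mono fun _ hi => by rw [hi.1, coeff_C_mul])
  exact ⟨C c * X, Y, hXa.C_mul c, hYb, (mul_assoc _ _ _).symm⟩

end NormedField

end MvPolynomial

theorem irreducible_stable_under_small_perturbation (n d : ℕ)
    (p : MvPolynomial (Fin n) ℂ) (hp : p.IsHomogeneous d) (hirr : Irreducible p) :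
    ∃ s : ℝ, 0 < s ∧
      ∀ q : MvPolynomial (Fin n) ℂ, q.IsHomogeneous d →
        (∀ i : Fin n →₀ ℕ, ‖coeff i q‖ ≤ s) →
        Irreducible (p + q) := by
  have hp0 : p ≠ 0 := hirr.ne_zero
  have hd : d ≠ 0 := fun hd => hirr.not_isUnit ((hp.isUnit_iff hp0).mpr hd)
  by_contra! hcon
  choose q hq hqs hqirr using fun m : ℕ => hcon (1 / (m + 1)) Nat.one_div_pos_of_nat
  let U : Ultrafilter ℕ := Ultrafilter.of atTop
  have hlim : ∀ τ, Tendsto (fun m => coeff τ (p + q m)) U (𝓝 (coeff τ p)) := fun τ => by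
    have hq0 : Tendsto (fun m => coeff τ (q m)) atTop (𝓝 0) :=
      squeeze_zero_norm (fun m => hqs m τ) tendsto_one_div_add_atTop_nhds_zero_nat
    simpa using (tendsto_const_nhds.add hq0).mono_left (Ultrafilter.of_le atTop)
  have hfac : ∀ᶠ m in U, ∃ ab ∈ antidiagonal d,
      ab.1 ≠ 0 ∧ ab.2 ≠ 0 ∧ (p + q m).HasHomogeneousFactorization ab.1 ab.2 := by
    filter_upwards [eventually_ne_zero_of_tendsto_coeff hp0 hlim] with m hm
    exact exists_hasHomogeneousFactorization_of_not_irreducible (hp.add (hq m)) hm hd (hqirr m)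
  obtain ⟨ab, -, hab⟩ := (U.eventually_exists_mem_iff (antidiagonal d).finite_toSet).mp hfac
  obtain ⟨-, ha, hb, -⟩ := hab.exists
  have hpfac := HasHomogeneousFactorization.of_tendsto U hp0 hlim (hab.mono fun _ h => h.2.2)
  exact hpfac.not_irreducible hp0 ha hb hirr
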